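/- Let F : ℝ → M_n(ℂ) be a one-parameter subgroup of GL_n(ℂ), i.e. F is continuous, F(0) = I, F(t+s) = F(t)·F(s) for all real t, s, and every F(t) is invertible. Then there exists a unique n×n complex matrix X such that F(t) = exp(t·X) for all t ∈ ℝ. (Property 1.) -/

import Mathlib

/-!
Pick `ε` with `A = ∫₀^ε F` invertible (possible since `ε⁻¹ A → F 0 = 1`). The group law gives
`F t * A = ∫ₜ^{t+ε} F = Φ (t + ε) - Φ t` with `Φ u = ∫₀^u F`, so `F` is differentiable with
`F' t = F t * X`, where `X = (F ε - 1) * A⁻¹`. Uniqueness for the linear ODE `y' = y * X` then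
forces `F t = exp (t • X)`, and `X` is determined as the derivative at `0`.
-/

open NormedSpace Filter Topology

section

variable {𝔸 : Type*} [NormedRing 𝔸] [NormedAlgebra ℝ 𝔸] [CompleteSpace 𝔸]

theorem eq_of_forall_exp_smul_eq {X Y : 𝔸} (h : ∀ t : ℝ, exp (t • X) = exp (t • Y)) : X = Y := by
  have hX := hasDerivAt_exp_smul_const (𝕂 := ℝ) X 0
  rw [funext h] at hX
  simpa using hX.unique (hasDerivAt_exp_smul_const (𝕂 := ℝ) Y 0)

theorem Continuous.exists_isUnit_intervalIntegral {f : ℝ → 𝔸} (hf : Continuous f)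
    (h0 : IsUnit (f 0)) : ∃ ε : ℝ, IsUnit (∫ s in 0..ε, f s) := by
  have hslope : Tendsto (slope (fun u => ∫ s in 0..u, f s) 0) (𝓝[≠] 0) (𝓝 (f 0)) :=
    (hf.integral_hasStrictDerivAt 0 0).hasDerivAt.tendsto_slope
  obtain ⟨ε, hunit, hε : ε ≠ 0⟩ :=
    ((hslope.eventually (Units.isOpen.mem_nhds h0)).and self_mem_nhdsWithin).exists
  have hslope_eq : ε • slope (fun u => ∫ s in 0..u, f s) 0 ε = ∫ s in 0..ε, f s := by
    simp [slope, smul_smul, hε]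
  exact ⟨ε, hslope_eq ▸ hunit.smul (Units.mk0 ε hε)⟩

theorem mul_intervalIntegral_eq_of_map_add {f : ℝ → 𝔸} (hf : Continuous f)
    (hadd : ∀ t s, f (t + s) = f t * f s) (t ε : ℝ) :
    f t * ∫ s in 0..ε, f s = ∫ s in t..t + ε, f s := by
  have hmul := (ContinuousLinearMap.mul ℝ 𝔸 (f t)).intervalIntegral_comp_comm
    (μ := MeasureTheory.volume) (hf.intervalIntegrable 0 ε)
  simp only [ContinuousLinearMap.mul_apply', ← hadd] at hmul
  simp [← hmul]

theorem Continuous.exists_hasDerivAt_mul_of_map_add {f : ℝ → 𝔸} (hf : Continuous f)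
    (h0 : f 0 = 1) (hadd : ∀ t s, f (t + s) = f t * f s) :
    ∃ X : 𝔸, ∀ t, HasDerivAt f (f t * X) t := by
  obtain ⟨ε, hA⟩ := hf.exists_isUnit_intervalIntegral (h0 ▸ isUnit_one)
  set Φ : ℝ → 𝔸 := fun u => ∫ s in 0..u, f s
  have hΦ : ∀ u, HasDerivAt Φ (f u) u := fun u => (hf.integral_hasStrictDerivAt 0 u).hasDerivAt
  have hrep : f = fun t => (Φ (t + ε) - Φ t) * ↑hA.unit⁻¹ := by
    funext t
    rw [intervalIntegral.integral_interval_sub_left (hf.intervalIntegrable _ _)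
      (hf.intervalIntegrable _ _), ← mul_intervalIntegral_eq_of_map_add hf hadd, mul_assoc,
      hA.mul_val_inv, mul_one]
  refine ⟨(f ε - 1) * ↑hA.unit⁻¹, fun t => ?_⟩
  have hderiv := (((hΦ (t + ε)).comp_add_const t ε).sub (hΦ t)).mul_const (↑hA.unit⁻¹ : 𝔸)
  rw [hadd] at hderiv
  convert hderiv using 1
  · exact hrep
  · noncomm_ring

theorem eq_exp_smul_of_hasDerivAt {f : ℝ → 𝔸} {X : 𝔸} (h0 : f 0 = 1)
    (hf : ∀ t, HasDerivAt f (f t * X) t) (t : ℝ) : f t = exp (t • X) := by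
  have hlip : LipschitzWith ‖(ContinuousLinearMap.mul ℝ 𝔸).flip X‖₊ (fun y : 𝔸 => y * X) :=
    ((ContinuousLinearMap.mul ℝ 𝔸).flip X).lipschitz
  refine congrFun (ODE_solution_unique_univ (v := fun _ y => y * X) (s := fun _ => Set.univ)
    (t₀ := 0) (fun _ => hlip.lipschitzOnWith) (fun t => ⟨hf t, trivial⟩)
    (fun t => ⟨hasDerivAt_exp_smul_const X t, trivial⟩) (by simp [h0])) t

theorem Continuous.existsUnique_eq_exp_smul_of_map_add {f : ℝ → 𝔸} (hf : Continuous f)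
    (h0 : f 0 = 1) (hadd : ∀ t s, f (t + s) = f t * f s) :
    ∃! X : 𝔸, ∀ t : ℝ, f t = exp (t • X) := by
  obtain ⟨X, hX⟩ := hf.exists_hasDerivAt_mul_of_map_add h0 hadd
  refine ⟨X, eq_exp_smul_of_hasDerivAt h0 hX, fun Y hY => eq_of_forall_exp_smul_eq fun t => ?_⟩
  rw [← hY, eq_exp_smul_of_hasDerivAt h0 hX]

end

theorem one_parameter_subgroup_eq_exp_general (n : ℕ) (F : ℝ → Matrix (Fin n) (Fin n) ℂ)
    (hcont : Continuous F) (h0 : F 0 = 1) (hadd : ∀ t s : ℝ, F (t + s) = F t * F s) :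
    ∃! X : Matrix (Fin n) (Fin n) ℂ, ∀ t : ℝ, F t = NormedSpace.exp (t • X) := by
  -- any submultiplicative norm inducing the product topology would do
  let _ : NormedRing (Matrix (Fin n) (Fin n) ℂ) := Matrix.linftyOpNormedRing
  let _ : NormedAlgebra ℝ (Matrix (Fin n) (Fin n) ℂ) := Matrix.linftyOpNormedAlgebra
  exact hcont.existsUnique_eq_exp_smul_of_map_add h0 hadd

/-- Property 1: if `F : ℝ → Mₙ(ℂ)` is a one-parameter subgroup of `GLₙ(ℂ)`
(`F` is continuous, `F 0 = 1`, `F (t + s) = F t * F s`, and every `F t` is invertible),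
then there is a unique `n × n` complex matrix `X` with `F t = exp (t • X)` for all `t : ℝ`. -/
theorem one_parameter_subgroup_eq_exp (n : ℕ) (F : ℝ → Matrix (Fin n) (Fin n) ℂ)
    (hcont : Continuous F) (h0 : F 0 = 1) (hadd : ∀ t s : ℝ, F (t + s) = F t * F s)
    (hunit : ∀ t : ℝ, IsUnit (F t)) :
    ∃! X : Matrix (Fin n) (Fin n) ℂ, ∀ t : ℝ, F t = NormedSpace.exp (t • X) :=
  one_parameter_subgroup_eq_exp_general n F hcont h0 hadd
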